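/- arXiv:2105.00850 — 3 statements merged into one kernel-verified Lean document; each statement's English description precedes it below -/
import Mathlib

section
/- Let n ∈ ℕ with n ≥ 1, let α > 0, let k ∈ {1,…,n}, and let p_k, p_{k+1}, …, p_n be non-negative real numbers such that ∑_{j=i}^{n} p_j ≤ α·(n+1-i) for every i ∈ {k, k+1, …, n}. Then ∑_{j=k}^{n} p_j/(n+1-j) ≤ α·∑_{j=k}^{n} 1/(n+1-j). -/
/-!
Summation by parts: with `S i = ∑_{j=i}^n p_j` and `w j = 1/(n+1-j)`, which is positive and
increasing, `∑ p_j w_j = w_k S_k + ∑_{i>k} (w_i - w_{i-1}) S_i`. All coefficients are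
non-negative, so the bounds `S_i ≤ α (n+1-i) = ∑_{j=i}^n α` may be inserted termwise, and the
same identity for the constant sequence `α` gives back `α ∑ w_j`.
-/

open Finset

theorem Finset.sum_Icc_mul_le_sum_Icc_mul_of_tail_le {f g w : ℕ → ℝ} {k n : ℕ}
    (hw : MonotoneOn w (Icc k n)) (hw₀ : ∀ j ∈ Icc k n, 0 ≤ w j)
    (htail : ∀ i ∈ Icc k n, ∑ j ∈ Icc i n, f j ≤ ∑ j ∈ Icc i n, g j) :
    ∑ j ∈ Icc k n, f j * w j ≤ ∑ j ∈ Icc k n, g j * w j := by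
  induction hd : n + 1 - k generalizing k w with
  | zero => simp [Icc_eq_empty_of_lt (show n < k by omega)]
  | succ d ih =>
    have hkn : k ≤ n := by omega
    have hk : k ∈ Icc k n := left_mem_Icc.2 hkn
    have hsub : Icc (k + 1) n ⊆ Icc k n := Icc_subset_Icc_left k.le_succ
    -- Peel off the constant weight `w k`; the rest is the same problem from `k + 1`.
    have hrest := ih (w := fun j => w j - w k)
      (fun i hi j hj hij => sub_le_sub_right (hw (hsub hi) (hsub hj) hij) _)
      (fun j hj => sub_nonneg.2 <| hw hk (hsub hj) (mem_Icc.1 (hsub hj)).1)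
      (fun i hi => htail i (hsub hi)) (by omega)
    have hhead := mul_le_mul_of_nonneg_right (htail k hk) (hw₀ k hk)
    simp only [mul_sub, sum_sub_distrib, ← sum_mul] at hrest
    have hk' : k ∉ Icc (k + 1) n := by simp
    rw [← insert_Icc_add_one_left_eq_Icc hkn, sum_insert hk', sum_insert hk'] at hhead ⊢
    linarith

theorem monotoneOn_one_div_add_one_sub (n : ℕ) :
    MonotoneOn (fun j : ℕ => 1 / ((n : ℝ) + 1 - j)) (Iic n) := by
  intro i hi j hj hij
  have hj' : (j : ℝ) ≤ n := by exact_mod_cast mem_Iic.1 hj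
  have hij' : (i : ℝ) ≤ j := by exact_mod_cast hij
  exact one_div_le_one_div_of_le (by linarith) (by linarith)

theorem sum_Icc_const_eq_mul {i n : ℕ} (hi : i ≤ n + 1) (α : ℝ) :
    ∑ _j ∈ Icc i n, α = α * ((n : ℝ) + 1 - i) := by
  rw [sum_const, Nat.card_Icc, nsmul_eq_mul, Nat.cast_sub hi]
  push_cast
  ring

theorem stmt_0_general (n : ℕ) (α : ℝ) (k : ℕ)
    (p : ℕ → ℝ)
    (hsum : ∀ i ∈ Finset.Icc k n, (∑ j ∈ Finset.Icc i n, p j) ≤ α * ((n : ℝ) + 1 - (i : ℝ))) :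
    (∑ j ∈ Finset.Icc k n, p j / ((n : ℝ) + 1 - (j : ℝ))) ≤
      α * ∑ j ∈ Finset.Icc k n, 1 / ((n : ℝ) + 1 - (j : ℝ)) := by
  have hIcc : Icc k n ⊆ Iic n := fun j hj => mem_Iic.2 (mem_Icc.1 hj).2
  simp only [div_eq_mul_one_div (p _), mul_sum]
  refine sum_Icc_mul_le_sum_Icc_mul_of_tail_le (g := fun _ => α)
    ((monotoneOn_one_div_add_one_sub n).mono hIcc) (fun j hj => ?_) (fun i hi => ?_)
  · have : (j : ℝ) ≤ n := by exact_mod_cast (mem_Icc.1 hj).2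
    exact one_div_nonneg.2 (by linarith)
  · rw [sum_Icc_const_eq_mul (by linarith [(mem_Icc.1 hi).2]) α]
    exact hsum i hi

theorem stmt_0 (n : ℕ) (hn : 1 ≤ n) (α : ℝ) (hα : 0 < α) (k : ℕ) (hk1 : 1 ≤ k) (hkn : k ≤ n)
    (p : ℕ → ℝ) (hp : ∀ j ∈ Finset.Icc k n, 0 ≤ p j)
    (hsum : ∀ i ∈ Finset.Icc k n, (∑ j ∈ Finset.Icc i n, p j) ≤ α * ((n : ℝ) + 1 - (i : ℝ))) :
    (∑ j ∈ Finset.Icc k n, p j / ((n : ℝ) + 1 - (j : ℝ))) ≤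
      α * ∑ j ∈ Finset.Icc k n, 1 / ((n : ℝ) + 1 - (j : ℝ)) :=
  stmt_0_general n α k p hsum
end

section
/- There exists a universal constant ξ > 0 such that for every n ∈ ℕ with n ≥ 1 and every t ∈ ℤ with |t| ≤ n^{3/5}, n+t even and |t| ≤ n, it holds that |C(n,(n+t)/2)·2^{-n} − c₀| ≤ ξ·(|t|³/n² + 1/n)·c₀, where c₀ := √(2/π)·(1/√n)·e^{-t²/(2n)} and C(n,k) denotes the binomial coefficient n choose k. -/
/-!
Write `C(n, k) / 2 ^ n` with Stirling's formula, whose error in `log n!` lies in `[0, 1 / (12 n)]`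
(Robbins). For `k = n (1 + x) / 2`, i.e. `x = t / n`, the logarithm of the ratio to `c₀` is the
Stirling error `O(1 / n)`, minus `n (log 2 - H((1 + x) / 2) - x² / 2) = O(n x⁴) = O(|t|³ / n²)`
(`H` the binary entropy), minus `log (1 - x²) / 2 = O(x²) = O((|t|³ + 1) / n²)`. The hypothesis
`|t| ≤ n ^ (3/5)` gives `|t|³ ≤ n²`, hence `|x| ≤ 4/5` for `n ≥ 2` and a bounded log-ratio, so
exponentiating costs only a constant factor. For `n = 1` one of `k`, `n - k` vanishes and the
bound is checked directly.
-/

open Real Filter Topology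
open scoped Nat

namespace Stirling

theorem log_stirlingSeq_le {n : ℕ} (hn : n ≠ 0) : log (stirlingSeq n) ≤ log √π + 1 / (12 * n) := by
  obtain ⟨n, rfl⟩ := Nat.exists_eq_succ_of_ne_zero hn
  -- Robbins' bound says exactly that `log (stirlingSeq k) - 1 / (12 k)` increases for `k ≥ 1`.
  have hmono : Monotone fun k : ℕ => log (stirlingSeq (k + 1)) - 1 / (12 * ((k + 1 : ℕ) : ℝ)) := by
    refine monotone_nat_of_le_succ fun k => ?_
    have hstep := log_stirlingSeq_sdiff_le (k + 1)
    have htel : 1 / (12 * ((k + 1 : ℕ) : ℝ)) - 1 / (12 * ((k + 1 + 1 : ℕ) : ℝ)) =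
        1 / (12 * ((k + 1 : ℕ) : ℝ) * ((k + 1 : ℕ) + 1)) := by
      push_cast; field_simp; ring
    linarith
  have hlim : Tendsto (fun k : ℕ => log (stirlingSeq (k + 1)) - 1 / (12 * ((k + 1 : ℕ) : ℝ)))
      atTop (𝓝 (log √π)) := by
    have hlog := ((continuousAt_log (by positivity)).tendsto.comp
      tendsto_stirlingSeq_sqrt_pi).comp (tendsto_add_atTop_nat 1)
    have hinv : Tendsto (fun k : ℕ => 1 / (12 * ((k + 1 : ℕ) : ℝ))) atTop (𝓝 0) := by
      simpa [mul_comm] using tendsto_one_div_add_atTop_nhds_zero_nat.const_mul (1 / 12 : ℝ)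
    simpa using hlog.sub hinv
  linarith [hmono.ge_of_tendsto hlim n]

end Stirling

noncomputable def logStirlingApprox (n : ℕ) : ℝ := n * log n - n + log n / 2 + log (2 * π) / 2

theorem logStirlingApprox_le_log_factorial {n : ℕ} (hn : n ≠ 0) : logStirlingApprox n ≤ log n ! :=
  Stirling.le_log_factorial_stirling hn

theorem log_factorial_le_logStirlingApprox_add {n : ℕ} (hn : n ≠ 0) :
    log n ! ≤ logStirlingApprox n + 1 / (12 * n) := by
  have hn' : (0 : ℝ) < n := by positivity
  have h := Stirling.log_stirlingSeq_le hn
  rw [Stirling.log_stirlingSeq_formula, log_sqrt pi_pos.le, log_mul two_ne_zero hn'.ne',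
    log_div hn'.ne' (exp_ne_zero 1), log_exp] at h
  rw [logStirlingApprox, log_mul two_ne_zero pi_ne_zero]
  linarith

theorem abs_log_choose_sub_logStirlingApprox_le {k m : ℕ} (hk : k ≠ 0) (hm : m ≠ 0) :
    |log ((k + m).choose k : ℝ) -
        (logStirlingApprox (k + m) - logStirlingApprox k - logStirlingApprox m)| ≤
      1 / (12 * k) + 1 / (12 * m) := by
  have hkm : k + m ≠ 0 := by omega
  have hchoose : log ((k + m).choose k : ℝ) = log (k + m)! - log k ! - log m ! := by
    have h := congrArg (fun j : ℕ => log (j : ℝ)) (Nat.add_choose_mul_factorial_mul_factorial k m)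
    simp only [Nat.cast_mul, ← Nat.choose_symm_add] at h
    have hpos : ((k + m).choose k : ℝ) ≠ 0 := by exact_mod_cast (Nat.choose_pos (by omega)).ne'
    rw [← h, log_mul (mul_ne_zero hpos (by positivity)) (by positivity),
      log_mul hpos (by positivity)]
    ring
  have hle : 1 / (12 * ((k + m : ℕ) : ℝ)) ≤ 1 / (12 * k) := by
    gcongr
    exact_mod_cast Nat.le_add_right k m
  have : 0 ≤ 1 / (12 * (m : ℝ)) := by positivity
  rw [hchoose, abs_le]
  constructor <;>
  linarith [logStirlingApprox_le_log_factorial hk, logStirlingApprox_le_log_factorial hm,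
    logStirlingApprox_le_log_factorial hkm, log_factorial_le_logStirlingApprox_add hk,
    log_factorial_le_logStirlingApprox_add hm, log_factorial_le_logStirlingApprox_add hkm]

theorem logStirlingApprox_add_sub_sub {k m : ℕ} (hk : k ≠ 0) (hm : m ≠ 0) :
    logStirlingApprox (k + m) - logStirlingApprox k - logStirlingApprox m =
      (k + m) * binEntropy (k / (k + m)) - log (2 * π * k * m / (k + m)) / 2 := by
  have hk' : (k : ℝ) ≠ 0 := by positivity
  have hm' : (m : ℝ) ≠ 0 := by positivity
  have hkm : (k + m : ℝ) ≠ 0 := by positivity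
  have hsub : 1 - (k : ℝ) / (k + m) = m / (k + m) := by field_simp; ring
  have hlog : log (2 * π * k * m / (k + m)) = log 2 + log π + log k + log m - log (k + m) := by
    rw [log_div (by positivity) hkm, log_mul (by positivity) hm', log_mul (by positivity) hk',
      log_mul two_ne_zero pi_ne_zero]
  simp only [logStirlingApprox, binEntropy, hsub, hlog, Nat.cast_add, log_inv,
    log_div hk' hkm, log_div hm' hkm, log_mul two_ne_zero pi_ne_zero]
  field_simp
  ring

theorem abs_log_two_sub_binEntropy_sub_le {x : ℝ} (hx : |x| < 1) :
    |log 2 - binEntropy ((1 + x) / 2) - x ^ 2 / 2| ≤ (1 / 3 + 1 / (1 - |x|)) * x ^ 4 := by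
  have hremainder : ∀ y : ℝ, |y| = |x| →
      |y + y ^ 2 / 2 + y ^ 3 / 3 + log (1 - y)| ≤ x ^ 4 / (1 - |x|) := by
    intro y hy
    have h := abs_log_sub_add_sum_range_le (hy ▸ hx) 3
    rw [hy, show 3 + 1 = 4 from rfl, pow_abs, abs_of_nonneg (by positivity : (0 : ℝ) ≤ x ^ 4)] at h
    simp only [Finset.sum_range_succ, Finset.sum_range_zero] at h
    norm_num at h
    exact h
  obtain ⟨hx₁, hx₂⟩ := abs_lt.1 hx
  have hlog : log 2 - binEntropy ((1 + x) / 2) - x ^ 2 / 2 = x ^ 4 / 3 +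
      ((1 + x) * (-x + (-x) ^ 2 / 2 + (-x) ^ 3 / 3 + log (1 - -x)) +
        (1 - x) * (x + x ^ 2 / 2 + x ^ 3 / 3 + log (1 - x))) / 2 := by
    have h1 : 1 - (1 + x) / 2 = (1 - x) / 2 := by ring
    simp only [binEntropy, h1, log_inv, log_div (by linarith : 1 + x ≠ 0) two_ne_zero,
      log_div (by linarith : 1 - x ≠ 0) two_ne_zero, sub_neg_eq_add]
    ring
  have hplus := abs_le.1 (hremainder (-x) (abs_neg x))
  have hminus := abs_le.1 (hremainder x rfl)
  rw [hlog, abs_le, add_mul, one_div_mul_eq_div, one_div_mul_eq_div]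
  generalize x ^ 4 / (1 - |x|) = r at hplus hminus
  constructor <;> nlinarith [hplus.1, hplus.2, hminus.1, hminus.2]

theorem abs_exp_sub_one_le_mul_exp (y : ℝ) : |exp y - 1| ≤ |y| * exp |y| := by
  rcases le_total 0 y with hy | hy
  · have h := mul_le_mul_of_nonneg_right (add_one_le_exp (-y)) (exp_pos y).le
    rw [← exp_add, neg_add_cancel, exp_zero] at h
    rw [abs_of_nonneg hy, abs_of_nonneg (by linarith [add_one_le_exp y])]
    linarith
  · rw [abs_of_nonpos hy, abs_of_nonpos (by linarith [exp_le_one_iff.2 hy])]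
    nlinarith [add_one_le_exp y, one_le_exp (neg_nonneg.2 hy)]

theorem abs_sub_le_of_abs_log_sub_le {a b δ : ℝ} (ha : 0 < a) (hb : 0 < b)
    (h : |log a - log b| ≤ δ) : |a - b| ≤ δ * exp δ * b := by
  have ha' : a = b * exp (log a - log b) := by rw [exp_sub, exp_log ha, exp_log hb]; field_simp
  calc |a - b| = |exp (log a - log b) - 1| * b := by
        rw [ha', ← mul_sub_one, abs_mul, abs_of_pos hb, mul_comm, ← ha']
    _ ≤ |log a - log b| * exp |log a - log b| * b := by
        gcongr; exact abs_exp_sub_one_le_mul_exp _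
    _ ≤ δ * exp δ * b := by have := (abs_nonneg _).trans h; gcongr

theorem sq_le_abs_pow_three_add_one (t : ℝ) : t ^ 2 ≤ |t| ^ 3 + 1 := by
  rw [← sq_abs]
  rcases le_total |t| 1 with h | h <;> nlinarith [abs_nonneg t]

noncomputable def binomialGaussian (n : ℕ) (t : ℝ) : ℝ :=
  √(2 / π) * (1 / √n) * exp (-t ^ 2 / (2 * n))

theorem binomialGaussian_pos {n : ℕ} (hn : n ≠ 0) (t : ℝ) : 0 < binomialGaussian n t := by
  unfold binomialGaussian; positivity

theorem log_binomialGaussian {n : ℕ} (hn : n ≠ 0) (t : ℝ) :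
    log (binomialGaussian n t) = -log (π * n / 2) / 2 - t ^ 2 / (2 * n) := by
  have hn' : (n : ℝ) ≠ 0 := by positivity
  rw [binomialGaussian, log_mul (by positivity) (exp_ne_zero _), log_exp,
    log_mul (by positivity) (by positivity), one_div, log_inv, log_sqrt (by positivity),
    log_sqrt (by positivity), log_div two_ne_zero pi_ne_zero, log_div (by positivity) two_ne_zero,
    log_mul pi_ne_zero hn']
  ring

theorem log_choose_div_two_pow_sub_log_binomialGaussian {n k m : ℕ} {x : ℝ} (hk : k ≠ 0)
    (hm : m ≠ 0) (hkm : k + m = n) (hx : (k : ℝ) - m = n * x) :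
    log ((n.choose k : ℝ) / 2 ^ n) - log (binomialGaussian n (n * x)) =
      (log (n.choose k : ℝ) - (logStirlingApprox n - logStirlingApprox k - logStirlingApprox m)) -
        n * (log 2 - binEntropy ((1 + x) / 2) - x ^ 2 / 2) - log (1 - x ^ 2) / 2 := by
  subst hkm
  have hk' : (0 : ℝ) < k := by positivity
  have hm' : (0 : ℝ) < m := by positivity
  push_cast at hx
  have hp : (k : ℝ) / (k + m) = (1 + x) / 2 := by field_simp; linarith
  have hkm : 4 * k * m = (k + m) ^ 2 * (1 - x ^ 2 : ℝ) := by
    linear_combination (-(k - m + (k + m) * x) : ℝ) * hx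
  have hx2 : 0 < 1 - x ^ 2 := by nlinarith [mul_pos hk' hm']
  have hvar : log (2 * π * k * m / (k + m)) = log (π * (k + m) / 2) + log (1 - x ^ 2) := by
    rw [← log_mul (by positivity) hx2.ne']
    congr 1
    field_simp
    linear_combination hkm
  rw [logStirlingApprox_add_sub_sub hk hm, log_binomialGaussian (by omega),
    log_div (Nat.cast_ne_zero.2 (Nat.choose_pos (by omega)).ne') (by positivity), log_pow]
  push_cast
  rw [hp, hvar]
  field_simp
  ring

theorem abs_log_choose_div_two_pow_sub_log_binomialGaussian_le {n k m : ℕ} {t : ℝ} (hn : n ≠ 0)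
    (hkm : k + m = n) (ht : (k : ℝ) - m = t) (htn : |t| ≤ 4 / 5 * n) :
    |log ((n.choose k : ℝ) / 2 ^ n) - log (binomialGaussian n t)| ≤
      6 * (|t| ^ 3 / n ^ 2 + 1 / n) := by
  have hN : (1 : ℝ) ≤ n := by exact_mod_cast Nat.one_le_iff_ne_zero.2 hn
  have hkm' : (k : ℝ) + m = n := by exact_mod_cast hkm
  obtain ⟨x, rfl⟩ : ∃ x : ℝ, t = n * x := ⟨t / n, by field_simp⟩
  have hx : |x| ≤ 4 / 5 := by
    rw [abs_mul, Nat.abs_cast, mul_comm (4 / 5 : ℝ)] at htn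
    exact le_of_mul_le_mul_left htn (by linarith)
  obtain ⟨hx₁, hx₂⟩ := abs_le.1 hx
  have hk : (n : ℝ) / 10 ≤ k := by nlinarith
  have hm : (n : ℝ) / 10 ≤ m := by nlinarith
  have hk0 : k ≠ 0 := by rintro rfl; norm_num at hk; linarith
  have hm0 : m ≠ 0 := by rintro rfl; norm_num at hm; linarith
  have hstirling : |log (n.choose k : ℝ) -
      (logStirlingApprox n - logStirlingApprox k - logStirlingApprox m)| ≤ 5 / (3 * n) := by
    have hk' : 1 / (12 * (k : ℝ)) ≤ 5 / (6 * n) := by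
      rw [div_le_div_iff₀ (by positivity) (by positivity)]; linarith
    have hm' : 1 / (12 * (m : ℝ)) ≤ 5 / (6 * n) := by
      rw [div_le_div_iff₀ (by positivity) (by positivity)]; linarith
    have := hkm ▸ abs_log_choose_sub_logStirlingApprox_le hk0 hm0
    linarith [show 5 / (6 * (n : ℝ)) + 5 / (6 * n) = 5 / (3 * n) by ring]
  have hentropy :
      |n * (log 2 - binEntropy ((1 + x) / 2) - x ^ 2 / 2)| ≤ 64 / 15 * (n * |x| ^ 3) := by
    have h5 : 1 / (1 - |x|) ≤ 5 := by rw [div_le_iff₀ (by linarith)]; linarith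
    have hx4 : x ^ 4 ≤ 4 / 5 * |x| ^ 3 := by
      nlinarith [mul_nonneg (pow_nonneg (abs_nonneg x) 3) (sub_nonneg.2 hx), sq_abs x]
    rw [abs_mul, Nat.abs_cast]
    calc (n : ℝ) * |log 2 - binEntropy ((1 + x) / 2) - x ^ 2 / 2|
        ≤ n * ((1 / 3 + 1 / (1 - |x|)) * x ^ 4) := by
          gcongr; exact abs_log_two_sub_binEntropy_sub_le (by linarith)
      _ ≤ n * (16 / 3 * (4 / 5 * |x| ^ 3)) := by
          have h16 : 1 / 3 + 1 / (1 - |x|) ≤ 16 / 3 := by linarith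
          exact mul_le_mul_of_nonneg_left (mul_le_mul h16 hx4 (by positivity) (by norm_num))
            (by positivity)
      _ = 64 / 15 * (n * |x| ^ 3) := by ring
  have hlog : |log (1 - x ^ 2)| ≤ 25 / 9 * x ^ 2 := by
    have hx2 : x ^ 2 ≤ 16 / 25 := by nlinarith
    have h := abs_log_sub_add_sum_range_le (x := x ^ 2)
      (by rw [abs_of_nonneg (sq_nonneg x)]; linarith) 0
    simp only [Finset.sum_range_zero, zero_add, pow_one, abs_of_nonneg (sq_nonneg x)] at h
    refine h.trans ?_
    rw [div_le_iff₀ (by linarith)]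
    nlinarith [sq_nonneg x]
  have hsq : x ^ 2 ≤ n * |x| ^ 3 + 1 / n := by
    have h := sq_le_abs_pow_three_add_one (n * x)
    rw [abs_mul, Nat.abs_cast] at h
    calc x ^ 2 = (n * x) ^ 2 / n ^ 2 := by field_simp
      _ ≤ ((n * |x|) ^ 3 + 1) / n ^ 2 := by gcongr
      _ = n * |x| ^ 3 + 1 / n ^ 2 := by field_simp
      _ ≤ n * |x| ^ 3 + 1 / n := by gcongr; nlinarith
  have hrhs : |(n : ℝ) * x| ^ 3 / n ^ 2 = n * |x| ^ 3 := by
    rw [abs_mul, Nat.abs_cast]; field_simp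
  rw [log_choose_div_two_pow_sub_log_binomialGaussian hk0 hm0 hkm ht, hrhs]
  rw [abs_le] at hstirling hentropy hlog ⊢
  constructor <;> linarith [hstirling.1, hstirling.2, hentropy.1, hentropy.2, hlog.1, hlog.2, hsq,
    show 5 / (3 * (n : ℝ)) = 5 / 3 * (1 / n) by ring]

theorem abs_choose_div_two_pow_sub_binomialGaussian_le {n k m : ℕ} {t : ℝ} (hn : 2 ≤ n)
    (hkm : k + m = n) (ht : (k : ℝ) - m = t) (ht3 : |t| ^ 3 ≤ n ^ 2) :
    |(n.choose k : ℝ) / 2 ^ n - binomialGaussian n t| ≤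
      6 * exp 12 * (|t| ^ 3 / n ^ 2 + 1 / n) * binomialGaussian n t := by
  have hN : (2 : ℝ) ≤ n := by exact_mod_cast hn
  have htn : |t| ≤ 4 / 5 * n := by
    by_contra! h
    have h' := pow_lt_pow_left₀ h (by positivity) three_ne_zero
    nlinarith [sq_nonneg (n : ℝ)]
  have heps : |t| ^ 3 / n ^ 2 + 1 / n ≤ 2 := by
    have h1 : |t| ^ 3 / n ^ 2 ≤ 1 := div_le_one_of_le₀ ht3 (by positivity)
    have h2 : 1 / (n : ℝ) ≤ 1 := by rw [div_le_one (by positivity)]; linarith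
    linarith
  have hlog := abs_log_choose_div_two_pow_sub_log_binomialGaussian_le (by omega) hkm ht htn
  have hchoose : (0 : ℝ) < n.choose k := by exact_mod_cast Nat.choose_pos (by omega)
  have hg := binomialGaussian_pos (n := n) (by omega) t
  refine (abs_sub_le_of_abs_log_sub_le (by positivity) hg hlog).trans ?_
  have : 0 ≤ |t| ^ 3 / n ^ 2 + 1 / n := by positivity
  have : exp (6 * (|t| ^ 3 / n ^ 2 + 1 / n)) ≤ exp 12 := exp_le_exp.2 (by linarith)
  calc 6 * (|t| ^ 3 / n ^ 2 + 1 / n) * exp (6 * (|t| ^ 3 / n ^ 2 + 1 / n)) * binomialGaussian n t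
      ≤ 6 * (|t| ^ 3 / n ^ 2 + 1 / n) * exp 12 * binomialGaussian n t := by gcongr
    _ = 6 * exp 12 * (|t| ^ 3 / n ^ 2 + 1 / n) * binomialGaussian n t := by ring

theorem abs_choose_one_div_two_sub_binomialGaussian_le (k : ℕ) {t : ℝ} (ht : |t| ≤ 1) :
    |(Nat.choose 1 k : ℝ) / 2 ^ 1 - binomialGaussian 1 t| ≤ 5 * binomialGaussian 1 t := by
  have hsqrt : 1 / 2 ≤ √(2 / π) := by
    rw [le_sqrt (by norm_num) (by positivity), le_div_iff₀ pi_pos]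
    nlinarith [pi_le_four]
  have hexp : 1 / 2 ≤ exp (-t ^ 2 / 2) := by
    nlinarith [add_one_le_exp (-t ^ 2 / 2), sq_abs t, abs_nonneg t]
  have hg : 1 / 4 ≤ binomialGaussian 1 t := by
    simp only [binomialGaussian, Nat.cast_one, sqrt_one, div_one, mul_one]
    nlinarith
  have hA : (Nat.choose 1 k : ℝ) / 2 ^ 1 ≤ 1 := by
    rw [div_le_one (by positivity)]; exact_mod_cast Nat.choose_le_two_pow 1 k
  have hA0 : (0 : ℝ) ≤ (Nat.choose 1 k : ℝ) / 2 ^ 1 := by positivity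
  rw [abs_le]; constructor <;> linarith

theorem pow_three_le_sq_of_le_rpow {a b : ℝ} (ha : 0 ≤ a) (hb : 1 ≤ b) (h : a ≤ b ^ ((3 : ℝ) / 5)) :
    a ^ 3 ≤ b ^ 2 :=
  calc a ^ 3 ≤ (b ^ ((3 : ℝ) / 5)) ^ 3 := by gcongr
    _ = b ^ ((9 : ℝ) / 5) := by rw [← rpow_natCast, ← rpow_mul (by linarith)]; norm_num
    _ ≤ b ^ (2 : ℝ) := rpow_le_rpow_of_exponent_le hb (by norm_num)
    _ = b ^ 2 := rpow_two b

theorem exists_toNat_add_eq_of_emod_two_eq_zero {n : ℕ} {t : ℤ} (hpar : ((n : ℤ) + t) % 2 = 0)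
    (htn : |t| ≤ n) :
    ∃ m : ℕ, (((n : ℤ) + t) / 2).toNat + m = n ∧ ((((n : ℤ) + t) / 2).toNat : ℤ) - m = t := by
  obtain ⟨h₁, h₂⟩ := abs_le.1 htn
  exact ⟨(((n : ℤ) - t) / 2).toNat, by omega, by omega⟩

theorem stmt_1 :
    ∃ ξ : ℝ, 0 < ξ ∧ ∀ n : ℕ, 1 ≤ n → ∀ t : ℤ,
      |(t : ℝ)| ≤ (n : ℝ) ^ ((3 : ℝ) / 5) → ((n : ℤ) + t) % 2 = 0 → |t| ≤ (n : ℤ) →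
      |(n.choose (((n : ℤ) + t) / 2).toNat : ℝ) / 2 ^ n -
          Real.sqrt (2 / Real.pi) * (1 / Real.sqrt n) * Real.exp (-(t : ℝ) ^ 2 / (2 * n))| ≤
        ξ * (|(t : ℝ)| ^ 3 / (n : ℝ) ^ 2 + 1 / n) *
          (Real.sqrt (2 / Real.pi) * (1 / Real.sqrt n) * Real.exp (-(t : ℝ) ^ 2 / (2 * n))) := by
  refine ⟨6 * exp 12, by positivity, fun n hn t ht hpar htn => ?_⟩
  obtain ⟨m, hkm, hkt⟩ := exists_toNat_add_eq_of_emod_two_eq_zero hpar htn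
  set k := (((n : ℤ) + t) / 2).toNat
  change |(n.choose k : ℝ) / 2 ^ n - binomialGaussian n t| ≤
    6 * exp 12 * (|(t : ℝ)| ^ 3 / n ^ 2 + 1 / n) * binomialGaussian n t
  obtain rfl | hn2 := hn.eq_or_lt
  · have ht1 : |(t : ℝ)| ≤ 1 := by simpa using ht
    have := binomialGaussian_pos one_ne_zero (t : ℝ)
    calc _ ≤ 5 * binomialGaussian 1 t := abs_choose_one_div_two_sub_binomialGaussian_le k ht1
      _ ≤ 6 * exp 12 * (|(t : ℝ)| ^ 3 / (1 : ℕ) ^ 2 + 1 / (1 : ℕ)) * binomialGaussian 1 t := by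
        gcongr
        have : 1 ≤ exp 12 := one_le_exp (by norm_num)
        simp only [Nat.cast_one, one_pow, div_one]
        nlinarith [pow_nonneg (abs_nonneg (t : ℝ)) 3]
  · exact abs_choose_div_two_pow_sub_binomialGaussian_le hn2 hkm (by exact_mod_cast hkt)
      (pow_three_le_sq_of_le_rpow (abs_nonneg _) (by exact_mod_cast hn) ht)
end

section
/- There exists a function φ : ℝ_{>0} → ℝ_{>0} such that for every c > 0, every n ∈ ℕ with n ≥ 2, every integer i with 1 ≤ i ≤ n − ⌊log^{2.5} n⌋, all x, α, β ∈ ℤ and every ε ∈ [-1,1] satisfying |α| ≤ √(c·s_i·log n), |x| ≤ √(c·ℓ_i·log n), |β| ≤ 1 and |ε| ≤ √(c·log n / s_i), it holds that |exp((α·x + β·x²)/s_{i+1}) − 1| ≤ φ(c)·√(log n)·|x| / ℓ_i. -/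
def lRound (m i : ℕ) : ℕ := m + 1 - i

def sRound (m i : ℕ) : ℕ := ∑ j ∈ Finset.Icc i m, lRound m j

/-!
Write `ℓ = ℓ_i` and `L = log n`. Since `s_i ≤ ℓ²` and `s_{i+1} = ℓ(ℓ-1)/2 ≥ ℓ²/4`, both `|α|` and
`|x|` are at most `ℓ√(cL)`, so the exponent `t` satisfies `|t| ≤ 8√(cL)|x|/ℓ`. The condition on `i`
forces `ℓ > L^{5/2} ≥ L²`, i.e. `L < √ℓ`, which together with `|x| ≤ √(cℓL)` gives `|t| ≤ 8c`;
finally `|eᵗ - 1| ≤ e^{|t|}|t| ≤ e^{8c}|t|`.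
-/

open Real

lemma sRound_eq_sum_range (n i : ℕ) : sRound n i = ∑ k ∈ Finset.range (lRound n i), (k + 1) := by
  unfold sRound lRound
  refine Finset.sum_nbij' (fun j => n - j) (fun k => n - k) ?_ ?_ ?_ ?_ ?_ <;>
    intro a ha <;> simp only [Finset.mem_Icc, Finset.mem_range] at * <;> omega

lemma two_mul_sRound (n i : ℕ) : 2 * sRound n i = lRound n i * (lRound n i + 1) := by
  rw [sRound_eq_sum_range]
  induction lRound n i with
  | zero => simp
  | succ m ih => rw [Finset.sum_range_succ, mul_add, ih]; ring

lemma sRound_le_sq (n i : ℕ) : sRound n i ≤ lRound n i ^ 2 := by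
  have := two_mul_sRound n i
  nlinarith

lemma sq_le_four_mul_sRound_succ {n i : ℕ} (h : i < n) :
    lRound n i ^ 2 ≤ 4 * sRound n (i + 1) := by
  have hs := two_mul_sRound n (i + 1)
  have hℓ : lRound n i = lRound n (i + 1) + 1 := by unfold lRound; omega
  have hpos : 1 ≤ lRound n (i + 1) := by unfold lRound; omega
  rw [hℓ]
  nlinarith

lemma abs_exp_sub_one_le_exp_abs_mul_abs (t : ℝ) : |exp t - 1| ≤ exp |t| * |t| := by
  rcases le_total 0 t with ht | ht
  · rw [abs_of_nonneg ht, abs_of_nonneg (by linarith [add_one_le_exp t])]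
    have h := add_one_le_exp (-t)
    have h1 : exp (-t) * exp t = 1 := by rw [← exp_add]; simp
    nlinarith [exp_pos t]
  · rw [abs_of_nonpos ht, abs_of_nonpos (sub_nonpos.2 (exp_le_one_iff.2 ht))]
    nlinarith [add_one_le_exp t, one_le_exp (neg_nonneg.2 ht)]

lemma one_le_logb_two {n : ℕ} (hn : 2 ≤ n) : 1 ≤ logb 2 n := by
  rw [le_logb_iff_rpow_le one_lt_two (by positivity)]
  simpa using (Nat.ofNat_le_cast.2 hn : (2 : ℝ) ≤ n)

lemma sq_lt_lRound_of_le_sub_floor {L p : ℝ} (hL : 1 ≤ L) (hp : 2 ≤ p) {n i : ℕ}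
    (h : (i : ℝ) ≤ n - ⌊L ^ p⌋₊) : i < n ∧ L ^ 2 < lRound n i := by
  have hfloor : 1 ≤ ⌊L ^ p⌋₊ := Nat.le_floor (by simpa using Real.one_le_rpow hL (by linarith))
  have hin : i + ⌊L ^ p⌋₊ ≤ n := by exact_mod_cast (le_sub_iff_add_le.1 h)
  refine ⟨by omega, ?_⟩
  calc L ^ 2 = L ^ (2 : ℝ) := (rpow_natCast L 2).symm
    _ ≤ L ^ p := rpow_le_rpow_of_exponent_le hL hp
    _ < ⌊L ^ p⌋₊ + 1 := Nat.lt_floor_add_one _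
    _ ≤ lRound n i := by unfold lRound; exact_mod_cast (by omega : ⌊L ^ p⌋₊ + 1 ≤ n + 1 - i)

lemma sqrt_mul_le_of_le_sq {c m L ℓ : ℝ} (hcL : 0 ≤ c * L) (hℓ : 0 ≤ ℓ) (hm : m ≤ ℓ ^ 2) :
    √(c * m * L) ≤ ℓ * √(c * L) := by
  rw [sqrt_le_left (by positivity), mul_pow, sq_sqrt hcL]
  nlinarith

lemma sqrt_mul_sqrt_le {c L ℓ : ℝ} (hc : 0 ≤ c) (hL : 0 ≤ L) (hℓ : 0 ≤ ℓ) (hLℓ : L ^ 2 ≤ ℓ) :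
    √(c * L) * √(c * ℓ * L) ≤ c * ℓ := by
  rw [← sqrt_mul (by positivity), sqrt_le_left (by positivity)]
  have := mul_le_mul_of_nonneg_left hLℓ (by positivity : 0 ≤ c ^ 2 * ℓ)
  nlinarith

lemma abs_quadratic_div_le {a b x K ℓ s : ℝ} (hℓ : 0 < ℓ) (hs : ℓ ^ 2 ≤ 4 * s)
    (ha : |a| ≤ ℓ * K) (hx : |x| ≤ ℓ * K) (hb : |b| ≤ 1) :
    |(a * x + b * x ^ 2) / s| ≤ 8 * K * |x| / ℓ := by
  have hs0 : 0 < s := by nlinarith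
  have hnum : |a * x + b * x ^ 2| ≤ 2 * ℓ * K * |x| :=
    calc |a * x + b * x ^ 2| ≤ |a| * |x| + |b| * |x| ^ 2 :=
          (abs_add_le _ _).trans_eq (by rw [abs_mul, abs_mul, abs_pow])
      _ ≤ ℓ * K * |x| + 1 * (ℓ * K) * |x| := by
          rw [sq, ← mul_assoc]
          gcongr
      _ = 2 * ℓ * K * |x| := by ring
  have hK : 0 ≤ K * |x| := by nlinarith [abs_nonneg a, abs_nonneg x]
  rw [abs_div, abs_of_pos hs0, div_le_div_iff₀ hs0 hℓ]
  nlinarith [mul_le_mul_of_nonneg_right hnum hℓ.le, mul_le_mul_of_nonneg_left hs hK]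

theorem stmt_10 :
    ∃ φ : ℝ → ℝ, (∀ c : ℝ, 0 < c → 0 < φ c) ∧
      ∀ c : ℝ, 0 < c → ∀ n : ℕ, 2 ≤ n → ∀ i : ℕ, 1 ≤ i →
        (i : ℝ) ≤ (n : ℝ) - (⌊Real.logb 2 n ^ ((5 : ℝ) / 2)⌋₊ : ℝ) →
        ∀ x α β : ℤ, ∀ ε : ℝ, ε ∈ Set.Icc (-1 : ℝ) 1 →
          |(α : ℝ)| ≤ Real.sqrt (c * (sRound n i : ℝ) * Real.logb 2 n) →
          |(x : ℝ)| ≤ Real.sqrt (c * (lRound n i : ℝ) * Real.logb 2 n) →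
          |β| ≤ 1 →
          |ε| ≤ Real.sqrt (c * Real.logb 2 n / (sRound n i : ℝ)) →
          |Real.exp (((α : ℝ) * (x : ℝ) + (β : ℝ) * (x : ℝ) ^ 2) / (sRound n (i + 1) : ℝ)) - 1| ≤
            φ c * Real.sqrt (Real.logb 2 n) * |(x : ℝ)| / (lRound n i : ℝ) := by
  refine ⟨fun c => 8 * √c * exp (8 * c), fun c hc => by positivity, ?_⟩
  intro c hc n hn i _ hi x α β _ _ hα hx hβ _
  set L := logb 2 n
  have hL : 1 ≤ L := one_le_logb_two hn
  obtain ⟨hin, hLℓ⟩ := sq_lt_lRound_of_le_sub_floor hL (by norm_num) hi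
  have hsi : (sRound n i : ℝ) ≤ (lRound n i : ℝ) ^ 2 := by exact_mod_cast sRound_le_sq n i
  have hsucc : (lRound n i : ℝ) ^ 2 ≤ 4 * (sRound n (i + 1) : ℝ) := by
    exact_mod_cast sq_le_four_mul_sRound_succ hin
  set ℓ : ℝ := (lRound n i : ℝ)
  have hℓ : 1 ≤ ℓ := by nlinarith
  have hcL : 0 ≤ c * L := by positivity
  have hα' : |(α : ℝ)| ≤ ℓ * √(c * L) :=
    hα.trans (sqrt_mul_le_of_le_sq hcL (by positivity) hsi)
  have hx' : |(x : ℝ)| ≤ ℓ * √(c * L) :=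
    hx.trans (sqrt_mul_le_of_le_sq hcL (by positivity) (by nlinarith))
  have ht := abs_quadratic_div_le (by positivity) hsucc hα' hx'
    (by exact_mod_cast hβ : |(β : ℝ)| ≤ 1)
  have hxc : √(c * L) * |(x : ℝ)| ≤ c * ℓ :=
    (mul_le_mul_of_nonneg_left hx (sqrt_nonneg _)).trans
      (sqrt_mul_sqrt_le hc.le (by positivity) (by positivity) hLℓ.le)
  have ht8 : 8 * √(c * L) * |(x : ℝ)| / ℓ ≤ 8 * c := by
    rw [div_le_iff₀ (by positivity)]; linarith
  calc _ ≤ exp (8 * c) * (8 * √(c * L) * |(x : ℝ)| / ℓ) :=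
        (abs_exp_sub_one_le_exp_abs_mul_abs _).trans (mul_le_mul (exp_le_exp.2 (ht.trans ht8)) ht
          (abs_nonneg _) (exp_pos _).le)
    _ = _ := by rw [sqrt_mul hc.le]; ring
end
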